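/- Let f(s) = log(1 + exp(s)). For w₁, w₂, c ∈ ℝ define K₁ = f(w₁+c) − f(c), K₂ = f(w₂+c) − f(c), K₁₂ = f(w₁+w₂+c) − f(w₁+c) − f(w₂+c) + f(c). If K₁ ≥ 0 and K₂ ≥ 0 then K₁₂ ≥ 0; if K₁ ≤ 0 and K₂ ≤ 0 then 0 ≤ K₁₂ ≤ min(−K₁, −K₂); if K₁ ≥ 0 and K₂ ≤ 0 then −K₁ ≤ K₁₂ ≤ 0. -/

import Mathlib

/-!
The soft-plus function is strictly increasing, so `K₁`, `K₂` have the signs of `w₁`, `w₂`, and it is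
convex (its derivative is the sigmoid). For a convex function, if `x ≤ y, z ≤ w` and
`y + z = x + w` then `f y + f z ≤ f x + f w`; applied to the four points `c`, `w₁ + c`, `w₂ + c`,
`w₁ + w₂ + c` this makes `K₁₂` nonnegative when `w₁, w₂` have the same sign and nonpositive
otherwise. The remaining bounds are monotonicity again: `K₁₂ + K₁ = f (w₁ + w₂ + c) - f (w₂ + c)`
and `K₁₂ + K₂ = f (w₁ + w₂ + c) - f (w₁ + c)`.
-/

open Set Real

section ConvexOn

variable {𝕜 : Type*} [Field 𝕜] [LinearOrder 𝕜] [IsStrictOrderedRing 𝕜] {f : 𝕜 → 𝕜}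

theorem ConvexOn.map_add_map_le_of_add_eq {s : Set 𝕜} (hf : ConvexOn 𝕜 s f) {x y z w : 𝕜}
    (hx : x ∈ s) (hw : w ∈ s) (hy : y ∈ Icc x w) (hz : z ∈ Icc x w) (h : y + z = x + w) :
    f y + f z ≤ f x + f w := by
  rcases (hy.1.trans hy.2).eq_or_lt with rfl | hxw
  · obtain rfl : y = x := le_antisymm hy.2 hy.1
    obtain rfl : z = y := le_antisymm hz.2 hz.1
    rfl
  have hd : 0 < w - x := sub_pos.2 hxw
  have hcomb : ∀ t ∈ Icc x w, f t ≤ (w - t) / (w - x) * f x + (t - x) / (w - x) * f w := by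
    intro t ht
    have ht_eq : (w - t) / (w - x) * x + (t - x) / (w - x) * w = t := by
      field_simp
      ring
    simpa only [ht_eq, smul_eq_mul] using hf.2 hx hw (div_nonneg (sub_nonneg.2 ht.2) hd.le)
      (div_nonneg (sub_nonneg.2 ht.1) hd.le) (by field_simp; ring)
  -- Since `y + z = x + w`, the weights on `x` in `hcomb y` and `hcomb z` add up to `1`.
  calc f y + f z
      ≤ ((w - y) / (w - x) * f x + (y - x) / (w - x) * f w) +
        ((w - z) / (w - x) * f x + (z - x) / (w - x) * f w) :=
        add_le_add (hcomb y hy) (hcomb z hz)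
    _ = f x + f w := by
        field_simp
        linear_combination (f w - f x) * h

variable (hf : ConvexOn 𝕜 univ f) {a b : 𝕜} (c : 𝕜)
include hf

theorem ConvexOn.mixed_diff_nonneg_of_mul_nonneg (hab : 0 ≤ a * b) :
    0 ≤ f (a + b + c) - f (a + c) - f (b + c) + f c := by
  rcases mul_nonneg_iff.1 hab with ⟨ha, hb⟩ | ⟨ha, hb⟩
  · have := hf.map_add_map_le_of_add_eq (mem_univ c) (mem_univ (a + b + c))
      (y := a + c) (z := b + c) ⟨by linarith, by linarith⟩ ⟨by linarith, by linarith⟩ (by ring)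
    linarith
  · have := hf.map_add_map_le_of_add_eq (mem_univ (a + b + c)) (mem_univ c)
      (y := a + c) (z := b + c) ⟨by linarith, by linarith⟩ ⟨by linarith, by linarith⟩ (by ring)
    linarith

theorem ConvexOn.mixed_diff_nonpos_of_nonneg_of_nonpos (ha : 0 ≤ a) (hb : b ≤ 0) :
    f (a + b + c) - f (a + c) - f (b + c) + f c ≤ 0 := by
  have := hf.map_add_map_le_of_add_eq (mem_univ (b + c)) (mem_univ (a + c))
    (y := c) (z := a + b + c) ⟨by linarith, by linarith⟩ ⟨by linarith, by linarith⟩ (by ring)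
  linarith

end ConvexOn

noncomputable def softplus (s : ℝ) : ℝ := log (1 + exp s)

theorem softplus_strictMono : StrictMono softplus := fun _ _ hst =>
  log_lt_log (by positivity) (by gcongr)

theorem hasDerivAt_softplus (s : ℝ) : HasDerivAt softplus (sigmoid s) s := by
  refine (((hasDerivAt_exp s).const_add 1).log (by positivity)).congr_deriv ?_
  rw [sigmoid_def, exp_neg]
  field_simp
  ring

theorem convexOn_softplus : ConvexOn ℝ univ softplus :=
  Monotone.convexOn_univ_of_deriv (fun s => (hasDerivAt_softplus s).differentiableAt)
    (by rw [funext fun s => (hasDerivAt_softplus s).deriv]; exact sigmoid_monotone)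

theorem two_input_softplus_coeff_inequalities (w₁ w₂ c : ℝ)
    (f : ℝ → ℝ) (hf : ∀ s, f s = Real.log (1 + Real.exp s))
    (K₁ K₂ K₁₂ : ℝ)
    (hK₁ : K₁ = f (w₁ + c) - f c)
    (hK₂ : K₂ = f (w₂ + c) - f c)
    (hK₁₂ : K₁₂ = f (w₁ + w₂ + c) - f (w₁ + c) - f (w₂ + c) + f c) :
    (0 ≤ K₁ → 0 ≤ K₂ → 0 ≤ K₁₂) ∧
    (K₁ ≤ 0 → K₂ ≤ 0 → 0 ≤ K₁₂ ∧ K₁₂ ≤ min (-K₁) (-K₂)) ∧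
    (0 ≤ K₁ → K₂ ≤ 0 → -K₁ ≤ K₁₂ ∧ K₁₂ ≤ 0) := by
  obtain rfl : f = softplus := funext hf
  have hnonneg (w : ℝ) : 0 ≤ softplus (w + c) - softplus c ↔ 0 ≤ w := by
    rw [sub_nonneg, softplus_strictMono.le_iff_le, le_add_iff_nonneg_left]
  have hnonpos (w : ℝ) : softplus (w + c) - softplus c ≤ 0 ↔ w ≤ 0 := by
    rw [sub_nonpos, softplus_strictMono.le_iff_le, add_le_iff_nonpos_left]
  have hmono := softplus_strictMono.monotone
  have hconv := convexOn_softplus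
  subst hK₁ hK₂ hK₁₂
  simp only [hnonneg, hnonpos]
  refine ⟨fun h₁ h₂ => ?_, fun h₁ h₂ => ⟨?_, le_min ?_ ?_⟩, fun h₁ h₂ => ⟨?_, ?_⟩⟩
  · exact hconv.mixed_diff_nonneg_of_mul_nonneg c (mul_nonneg h₁ h₂)
  · exact hconv.mixed_diff_nonneg_of_mul_nonneg c (mul_nonneg_of_nonpos_of_nonpos h₁ h₂)
  · linarith [hmono (show w₁ + w₂ + c ≤ w₂ + c by linarith)]
  · linarith [hmono (show w₁ + w₂ + c ≤ w₁ + c by linarith)]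
  · linarith [hmono (show w₂ + c ≤ w₁ + w₂ + c by linarith)]
  · exact hconv.mixed_diff_nonpos_of_nonneg_of_nonpos c h₁ h₂
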